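/- Let F = ℚ(β_{ijk} : 1 ≤ i<j<k ≤ 5) be the field of rational functions in 10 indeterminates indexed by the triangles of {1,...,5}, and let ω := ∂β. Suppose a family (e'_s) of vectors in F^3 indexed by the ten triangles of {1,...,5}, extended antisymmetrically to ordered triples, satisfies: (a) Σ_{k ∈ {1,...,5}\{i,j}} e'_{ijk} = 0 for every ordered pair (i,j) of distinct elements; (b) Σ_s β'_s e'_s = 0 for some 2-cochain β' on {1,...,5} with ∂β' = ∂β; (c) the vectors e'_s span F^3. Then there exists an invertible matrix A ∈ GL_3(F) such that e'_s = A·e_s for all ten triangles s, where e_s are the triangle vectors of the pentachoron 12345 built from ω. (Existence and uniqueness up to gauge automorphisms of triangle vectors for one pentachoron.) -/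

import Mathlib

open Finset

noncomputable section

/-- The value of `ω` on the 4-element vertex subset of the pentachoron `v`
obtained by omitting the vertex at position `r`. -/
def wOmit {F : Type*} [Field F] (ω : Finset ℕ → F) (v : Fin 5 → ℕ) (r : Fin 5) : F :=
  ω (Finset.image (fun p : Fin 4 => v (r.succAbove p)) Finset.univ)

/-- The triangle vector `e_s` of the pentachoron with ordered vertices
`v 0 < v 1 < v 2 < v 3 < v 4`, built from the 3-cochain `ω`
(the zero vector if `s` is not a triangle of this pentachoron). -/
def pentV {F : Type*} [Field F] (ω : Finset ℕ → F) (v : Fin 5 → ℕ) (s : Finset ℕ) :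
    Fin 3 → F :=
  if s = {v 0, v 1, v 2} then ![0, wOmit ω v 1, wOmit ω v 3 - wOmit ω v 4]
  else if s = {v 0, v 1, v 3} then ![0, 0, -wOmit ω v 3]
  else if s = {v 0, v 1, v 4} then ![0, -wOmit ω v 1, wOmit ω v 4]
  else if s = {v 0, v 2, v 3} then ![wOmit ω v 0, -wOmit ω v 3, wOmit ω v 3]
  else if s = {v 0, v 2, v 4} then ![-wOmit ω v 0, wOmit ω v 1 + wOmit ω v 3, -wOmit ω v 4]
  else if s = {v 0, v 3, v 4} then ![wOmit ω v 0, -wOmit ω v 3, 0]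
  else if s = {v 1, v 2, v 3} then ![-wOmit ω v 1, 0, -wOmit ω v 3]
  else if s = {v 1, v 2, v 4} then ![wOmit ω v 1, -wOmit ω v 1, wOmit ω v 4]
  else if s = {v 1, v 3, v 4} then ![-wOmit ω v 1, 0, 0]
  else if s = {v 2, v 3, v 4} then ![wOmit ω v 1 - wOmit ω v 0, wOmit ω v 3, 0]
  else 0

/-- The triangle functional `f_s` (written as a row vector) of the pentachoron
with ordered vertices `v 0 < v 1 < v 2 < v 3 < v 4`, built from the 3-cochain `ω`
(zero if `s` is not a triangle of this pentachoron). -/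
def pentF {F : Type*} [Field F] (ω : Finset ℕ → F) (v : Fin 5 → ℕ) (s : Finset ℕ) :
    Fin 3 → F :=
  let w := wOmit ω v
  if s = {v 0, v 1, v 2} then ![0, 0, 1 / (w 4 * w 3)]
  else if s = {v 0, v 1, v 3} then
    ![1 / (w 2 * w 1), -((w 1 - w 0) / (w 3 * w 2 * w 1)), -((w 2 + w 4) / (w 4 * w 3 * w 2))]
  else if s = {v 0, v 1, v 4} then
    ![-(1 / (w 2 * w 1)), (w 1 - w 0) / (w 3 * w 2 * w 1), 1 / (w 3 * w 2)]
  else if s = {v 0, v 2, v 3} then ![0, 1 / (w 3 * w 1), 1 / (w 4 * w 3)]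
  else if s = {v 0, v 2, v 4} then ![0, -(1 / (w 3 * w 1)), 0]
  else if s = {v 0, v 3, v 4} then
    ![1 / (w 2 * w 1), (w 3 - w 4) / (w 3 * w 2 * w 1), -(1 / (w 3 * w 2))]
  else if s = {v 1, v 2, v 3} then
    ![-(1 / (w 1 * w 0)), -(1 / (w 3 * w 1)), -(1 / (w 4 * w 3))]
  else if s = {v 1, v 2, v 4} then ![1 / (w 1 * w 0), 1 / (w 3 * w 1), 0]
  else if s = {v 1, v 3, v 4} then
    ![-((w 0 + w 2) / (w 2 * w 1 * w 0)), -((w 3 - w 4) / (w 3 * w 2 * w 1)), 1 / (w 3 * w 2)]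
  else if s = {v 2, v 3, v 4} then ![1 / (w 1 * w 0), 0, 0]
  else 0

/-- The simplicial coboundary of a 2-cochain `β`, evaluated on a 4-element subset `t`:
`(∂β)_{ijkl} = β_{jkl} - β_{ikl} + β_{ijl} - β_{ijk}` for `i < j < k < l`. -/
def cobound {F : Type*} [Field F] (β : Finset ℕ → F) (t : Finset ℕ) : F :=
  ∑ x ∈ t, (-1 : F) ^ ((t.filter (fun y => y < x)).card) * β (t.erase x)

/-- The sign of the permutation sorting the pairwise distinct `i, j, k`
(zero if they are not pairwise distinct). -/
def triSign (i j k : ℕ) : ℤ :=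
  if i < j ∧ j < k then 1
  else if i < k ∧ k < j then -1
  else if j < i ∧ i < k then -1
  else if j < k ∧ k < i then 1
  else if k < i ∧ i < j then 1
  else if k < j ∧ j < i then -1
  else 0

/-- The triangle vectors of the pentachoron `v`, extended antisymmetrically
to arbitrary ordered triples of vertices. -/
def triV {F : Type*} [Field F] (ω : Finset ℕ → F) (v : Fin 5 → ℕ) (i j k : ℕ) : Fin 3 → F :=
  triSign i j k • pentV ω v {i, j, k}

/-- The triangle functionals of the pentachoron `v`, extended antisymmetrically
to arbitrary ordered triples of vertices. -/
def triF {F : Type*} [Field F] (ω : Finset ℕ → F) (v : Fin 5 → ℕ) (i j k : ℕ) : Fin 3 → F :=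
  triSign i j k • pentF ω v {i, j, k}

/-- Evaluate a family indexed by ordered triples on an (unordered) triangle,
via its increasing enumeration. -/
def onTri {V : Type*} [Zero V] (g : ℕ → ℕ → ℕ → V) (s : Finset ℕ) : V :=
  match s.sort (· ≤ ·) with
  | [i, j, k] => g i j k
  | _ => 0

/-- Triangles on the vertices `1, …, n`: 3-element subsets of `{1, …, n}`. -/
def Tri (n : ℕ) := {s : Finset ℕ // s ⊆ Finset.Icc 1 n ∧ s.card = 3}

/-- The field `ℚ(β_{ijk} : 1 ≤ i < j < k ≤ n)` of rational functions in
indeterminates indexed by the triangles on the vertices `1, …, n`. -/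
abbrev FF (n : ℕ) := FractionRing (MvPolynomial (Tri n) ℚ)

/-- The generic 2-cochain on `{1, …, n}`, whose value on each triangle is the
corresponding indeterminate of `FF n`. -/
def betaGen (n : ℕ) : Finset ℕ → FF n := fun s =>
  if h : s ⊆ Finset.Icc 1 n ∧ s.card = 3 then
    algebraMap (MvPolynomial (Tri n) ℚ) (FF n) (MvPolynomial.X ⟨s, h⟩)
  else 0


theorem onTri_eq' {V : Type*} [Zero V] (g : ℕ → ℕ → ℕ → V) {s : Finset ℕ} {i j k : ℕ}
    (h : s.sort (· ≤ ·) = [i, j, k]) : onTri g s = g i j k := by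
  unfold onTri; rw [h]

lemma sort_triple {i j k : ℕ} (h1 : i < j) (h2 : j < k) :
    ({i,j,k} : Finset ℕ).sort (· ≤ ·) = [i,j,k] := by
  rw [show ({i,j,k}:Finset ℕ) = insert i (insert j {k}) from rfl]
  rw [Finset.sort_insert (· ≤ ·) (by intro b hb; simp at hb; rcases hb with rfl|rfl <;> omega)
        (by simp; omega),
      Finset.sort_insert (· ≤ ·) (by intro b hb; simp at hb; subst hb; omega)
        (by simp; omega),
      Finset.sort_singleton]

lemma onTri3 {V : Type*} [Zero V] (g : ℕ → ℕ → ℕ → V) {i j k : ℕ} (h1 : i < j) (h2 : j < k) :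
    onTri g {i,j,k} = g i j k :=
  onTri_eq' g (sort_triple h1 h2)

instance (n : ℕ) : DecidableEq (Tri n) :=
  inferInstanceAs (DecidableEq {s : Finset ℕ // s ⊆ Finset.Icc 1 n ∧ s.card = 3})

lemma betaGen_comb_ne (a b c d : Finset ℕ)
    (ha : a ⊆ Finset.Icc 1 5 ∧ a.card = 3) (hb : b ⊆ Finset.Icc 1 5 ∧ b.card = 3)
    (hc : c ⊆ Finset.Icc 1 5 ∧ c.card = 3) (hd : d ⊆ Finset.Icc 1 5 ∧ d.card = 3)
    (hab : a ≠ b) (hac : a ≠ c) (had : a ≠ d) :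
    betaGen 5 a - betaGen 5 b + betaGen 5 c - betaGen 5 d ≠ 0 := by
  simp only [betaGen]
  rw [dif_pos ha, dif_pos hb, dif_pos hc, dif_pos hd]
  rw [← map_sub, ← map_add, ← map_sub]
  rw [(map_ne_zero_iff _ (IsFractionRing.injective (MvPolynomial (Tri 5) ℚ) (FF 5)))]
  intro h
  have := congrArg (MvPolynomial.eval (fun i : Tri 5 => @ite _ (i = ⟨a, ha⟩) (Classical.propDecidable _) (1:ℚ) 0)) h
  simp only [map_sub, map_add, map_zero] at this
  erw [MvPolynomial.eval_X, MvPolynomial.eval_X, MvPolynomial.eval_X, MvPolynomial.eval_X] at this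
  have hba : (⟨b, hb⟩ : Tri 5) ≠ ⟨a, ha⟩ := fun h => Ne.symm hab (congrArg Subtype.val h)
  have hca : (⟨c, hc⟩ : Tri 5) ≠ ⟨a, ha⟩ := fun h => Ne.symm hac (congrArg Subtype.val h)
  have hda : (⟨d, hd⟩ : Tri 5) ≠ ⟨a, ha⟩ := fun h => Ne.symm had (congrArg Subtype.val h)
  erw [if_neg hba, if_neg hca, if_neg hda] at this
  norm_num at this
  exact this rfl

lemma cb2345 {F : Type*} [Field F] (β : Finset ℕ → F) :
    cobound β {2,3,4,5} = β {3,4,5} - β {2,4,5} + β {2,3,5} - β {2,3,4} := by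
  rw [cobound, show ({2,3,4,5}:Finset ℕ) = insert 2 (insert 3 (insert 4 {5})) from rfl]
  rw [Finset.sum_insert (by decide), Finset.sum_insert (by decide),
      Finset.sum_insert (by decide), Finset.sum_singleton]
  norm_num [
    show Finset.filter (fun y => y < 2) (insert 2 (insert 3 (insert 4 {5}))) = (∅ : Finset ℕ) from by decide,
    show Finset.filter (fun y => y ≤ 1) (insert 2 (insert 3 (insert 4 {5}))) = (∅ : Finset ℕ) from by decide,
    show (insert 2 (insert 3 (insert 4 {5})) : Finset ℕ).erase 2 = {3,4,5} from by decide,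
    show Finset.filter (fun y => y < 3) (insert 2 (insert 3 (insert 4 {5}))) = {2} from by decide,
    show (insert 2 (insert 3 (insert 4 {5})) : Finset ℕ).erase 3 = {2,4,5} from by decide,
    show Finset.filter (fun y => y < 4) (insert 2 (insert 3 (insert 4 {5}))) = {2,3} from by decide,
    show (insert 2 (insert 3 (insert 4 {5})) : Finset ℕ).erase 4 = {2,3,5} from by decide,
    show Finset.filter (fun y => y < 5) (insert 2 (insert 3 (insert 4 {5}))) = {2,3,4} from by decide,
    show (insert 2 (insert 3 (insert 4 {5})) : Finset ℕ).erase 5 = {2,3,4} from by decide]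
  ring

lemma cb1345 {F : Type*} [Field F] (β : Finset ℕ → F) :
    cobound β {1,3,4,5} = β {3,4,5} - β {1,4,5} + β {1,3,5} - β {1,3,4} := by
  rw [cobound, show ({1,3,4,5}:Finset ℕ) = insert 1 (insert 3 (insert 4 {5})) from rfl]
  rw [Finset.sum_insert (by decide), Finset.sum_insert (by decide),
      Finset.sum_insert (by decide), Finset.sum_singleton]
  norm_num [
    show Finset.filter (fun y => y < 1) (insert 1 (insert 3 (insert 4 {5}))) = (∅ : Finset ℕ) from by decide,
    show Finset.filter (fun y => y = 0) (insert 1 (insert 3 (insert 4 {5}))) = (∅ : Finset ℕ) from by decide,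
    show (insert 1 (insert 3 (insert 4 {5})) : Finset ℕ).erase 1 = {3,4,5} from by decide,
    show Finset.filter (fun y => y < 3) (insert 1 (insert 3 (insert 4 {5}))) = {1} from by decide,
    show (insert 1 (insert 3 (insert 4 {5})) : Finset ℕ).erase 3 = {1,4,5} from by decide,
    show Finset.filter (fun y => y < 4) (insert 1 (insert 3 (insert 4 {5}))) = {1,3} from by decide,
    show (insert 1 (insert 3 (insert 4 {5})) : Finset ℕ).erase 4 = {1,3,5} from by decide,
    show Finset.filter (fun y => y < 5) (insert 1 (insert 3 (insert 4 {5}))) = {1,3,4} from by decide,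
    show (insert 1 (insert 3 (insert 4 {5})) : Finset ℕ).erase 5 = {1,3,4} from by decide]
  ring

lemma cb1245 {F : Type*} [Field F] (β : Finset ℕ → F) :
    cobound β {1,2,4,5} = β {2,4,5} - β {1,4,5} + β {1,2,5} - β {1,2,4} := by
  rw [cobound, show ({1,2,4,5}:Finset ℕ) = insert 1 (insert 2 (insert 4 {5})) from rfl]
  rw [Finset.sum_insert (by decide), Finset.sum_insert (by decide),
      Finset.sum_insert (by decide), Finset.sum_singleton]
  norm_num [
    show Finset.filter (fun y => y < 1) (insert 1 (insert 2 (insert 4 {5}))) = (∅ : Finset ℕ) from by decide,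
    show Finset.filter (fun y => y = 0) (insert 1 (insert 2 (insert 4 {5}))) = (∅ : Finset ℕ) from by decide,
    show (insert 1 (insert 2 (insert 4 {5})) : Finset ℕ).erase 1 = {2,4,5} from by decide,
    show Finset.filter (fun y => y < 2) (insert 1 (insert 2 (insert 4 {5}))) = {1} from by decide,
    show Finset.filter (fun y => y ≤ 1) (insert 1 (insert 2 (insert 4 {5}))) = {1} from by decide,
    show (insert 1 (insert 2 (insert 4 {5})) : Finset ℕ).erase 2 = {1,4,5} from by decide,
    show Finset.filter (fun y => y < 4) (insert 1 (insert 2 (insert 4 {5}))) = {1,2} from by decide,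
    show (insert 1 (insert 2 (insert 4 {5})) : Finset ℕ).erase 4 = {1,2,5} from by decide,
    show Finset.filter (fun y => y < 5) (insert 1 (insert 2 (insert 4 {5}))) = {1,2,4} from by decide,
    show (insert 1 (insert 2 (insert 4 {5})) : Finset ℕ).erase 5 = {1,2,4} from by decide]
  ring

lemma cb1235 {F : Type*} [Field F] (β : Finset ℕ → F) :
    cobound β {1,2,3,5} = β {2,3,5} - β {1,3,5} + β {1,2,5} - β {1,2,3} := by
  rw [cobound, show ({1,2,3,5}:Finset ℕ) = insert 1 (insert 2 (insert 3 {5})) from rfl]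
  rw [Finset.sum_insert (by decide), Finset.sum_insert (by decide),
      Finset.sum_insert (by decide), Finset.sum_singleton]
  norm_num [
    show Finset.filter (fun y => y < 1) (insert 1 (insert 2 (insert 3 {5}))) = (∅ : Finset ℕ) from by decide,
    show Finset.filter (fun y => y = 0) (insert 1 (insert 2 (insert 3 {5}))) = (∅ : Finset ℕ) from by decide,
    show (insert 1 (insert 2 (insert 3 {5})) : Finset ℕ).erase 1 = {2,3,5} from by decide,
    show Finset.filter (fun y => y < 2) (insert 1 (insert 2 (insert 3 {5}))) = {1} from by decide,
    show Finset.filter (fun y => y ≤ 1) (insert 1 (insert 2 (insert 3 {5}))) = {1} from by decide,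
    show (insert 1 (insert 2 (insert 3 {5})) : Finset ℕ).erase 2 = {1,3,5} from by decide,
    show Finset.filter (fun y => y < 3) (insert 1 (insert 2 (insert 3 {5}))) = {1,2} from by decide,
    show (insert 1 (insert 2 (insert 3 {5})) : Finset ℕ).erase 3 = {1,2,5} from by decide,
    show Finset.filter (fun y => y < 5) (insert 1 (insert 2 (insert 3 {5}))) = {1,2,3} from by decide,
    show (insert 1 (insert 2 (insert 3 {5})) : Finset ℕ).erase 5 = {1,2,3} from by decide]
  ring

lemma cb1234 {F : Type*} [Field F] (β : Finset ℕ → F) :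
    cobound β {1,2,3,4} = β {2,3,4} - β {1,3,4} + β {1,2,4} - β {1,2,3} := by
  rw [cobound, show ({1,2,3,4}:Finset ℕ) = insert 1 (insert 2 (insert 3 {4})) from rfl]
  rw [Finset.sum_insert (by decide), Finset.sum_insert (by decide),
      Finset.sum_insert (by decide), Finset.sum_singleton]
  norm_num [
    show Finset.filter (fun y => y < 1) (insert 1 (insert 2 (insert 3 {4}))) = (∅ : Finset ℕ) from by decide,
    show Finset.filter (fun y => y = 0) (insert 1 (insert 2 (insert 3 {4}))) = (∅ : Finset ℕ) from by decide,
    show (insert 1 (insert 2 (insert 3 {4})) : Finset ℕ).erase 1 = {2,3,4} from by decide,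
    show Finset.filter (fun y => y < 2) (insert 1 (insert 2 (insert 3 {4}))) = {1} from by decide,
    show Finset.filter (fun y => y ≤ 1) (insert 1 (insert 2 (insert 3 {4}))) = {1} from by decide,
    show (insert 1 (insert 2 (insert 3 {4})) : Finset ℕ).erase 2 = {1,3,4} from by decide,
    show Finset.filter (fun y => y < 3) (insert 1 (insert 2 (insert 3 {4}))) = {1,2} from by decide,
    show (insert 1 (insert 2 (insert 3 {4})) : Finset ℕ).erase 3 = {1,2,4} from by decide,
    show Finset.filter (fun y => y < 4) (insert 1 (insert 2 (insert 3 {4}))) = {1,2,3} from by decide,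
    show (insert 1 (insert 2 (insert 3 {4})) : Finset ℕ).erase 4 = {1,2,3} from by decide]
  ring

lemma wom0 {F : Type*} [Field F] (ω : Finset ℕ → F) :
    wOmit ω ![1,2,3,4,5] 0 = ω {2,3,4,5} := by
  rw [wOmit, show Finset.image (fun p : Fin 4 => (![1,2,3,4,5] : Fin 5 → ℕ) ((0:Fin 5).succAbove p)) Finset.univ = {2,3,4,5} from by decide]

lemma wom1 {F : Type*} [Field F] (ω : Finset ℕ → F) :
    wOmit ω ![1,2,3,4,5] 1 = ω {1,3,4,5} := by
  rw [wOmit, show Finset.image (fun p : Fin 4 => (![1,2,3,4,5] : Fin 5 → ℕ) ((1:Fin 5).succAbove p)) Finset.univ = {1,3,4,5} from by decide]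

lemma wom2 {F : Type*} [Field F] (ω : Finset ℕ → F) :
    wOmit ω ![1,2,3,4,5] 2 = ω {1,2,4,5} := by
  rw [wOmit, show Finset.image (fun p : Fin 4 => (![1,2,3,4,5] : Fin 5 → ℕ) ((2:Fin 5).succAbove p)) Finset.univ = {1,2,4,5} from by decide]

lemma wom3 {F : Type*} [Field F] (ω : Finset ℕ → F) :
    wOmit ω ![1,2,3,4,5] 3 = ω {1,2,3,5} := by
  rw [wOmit, show Finset.image (fun p : Fin 4 => (![1,2,3,4,5] : Fin 5 → ℕ) ((3:Fin 5).succAbove p)) Finset.univ = {1,2,3,5} from by decide]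

lemma wom4 {F : Type*} [Field F] (ω : Finset ℕ → F) :
    wOmit ω ![1,2,3,4,5] 4 = ω {1,2,3,4} := by
  rw [wOmit, show Finset.image (fun p : Fin 4 => (![1,2,3,4,5] : Fin 5 → ℕ) ((4:Fin 5).succAbove p)) Finset.univ = {1,2,3,4} from by decide]

lemma pv123 {F : Type*} [Field F] (ω : Finset ℕ → F) :
    pentV ω ![1,2,3,4,5] {1,2,3} = ![0, ω {1,3,4,5}, ω {1,2,3,5} - ω {1,2,3,4}] := by
  rw [pentV, if_pos (by decide), ]
  simp only [wom0, wom1, wom2, wom3, wom4]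

lemma pv124 {F : Type*} [Field F] (ω : Finset ℕ → F) :
    pentV ω ![1,2,3,4,5] {1,2,4} = ![0, 0, -ω {1,2,3,5}] := by
  rw [pentV, if_neg (by decide), if_pos (by decide), ]
  simp only [wom0, wom1, wom2, wom3, wom4]

lemma pv125 {F : Type*} [Field F] (ω : Finset ℕ → F) :
    pentV ω ![1,2,3,4,5] {1,2,5} = ![0, -ω {1,3,4,5}, ω {1,2,3,4}] := by
  rw [pentV, if_neg (by decide), if_neg (by decide), if_pos (by decide), ]
  simp only [wom0, wom1, wom2, wom3, wom4]

lemma pv134 {F : Type*} [Field F] (ω : Finset ℕ → F) :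
    pentV ω ![1,2,3,4,5] {1,3,4} = ![ω {2,3,4,5}, -ω {1,2,3,5}, ω {1,2,3,5}] := by
  rw [pentV, if_neg (by decide), if_neg (by decide), if_neg (by decide), if_pos (by decide), ]
  simp only [wom0, wom1, wom2, wom3, wom4]

lemma pv135 {F : Type*} [Field F] (ω : Finset ℕ → F) :
    pentV ω ![1,2,3,4,5] {1,3,5} = ![-ω {2,3,4,5}, ω {1,3,4,5} + ω {1,2,3,5}, -ω {1,2,3,4}] := by
  rw [pentV, if_neg (by decide), if_neg (by decide), if_neg (by decide), if_neg (by decide), if_pos (by decide), ]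
  simp only [wom0, wom1, wom2, wom3, wom4]

lemma pv145 {F : Type*} [Field F] (ω : Finset ℕ → F) :
    pentV ω ![1,2,3,4,5] {1,4,5} = ![ω {2,3,4,5}, -ω {1,2,3,5}, 0] := by
  rw [pentV, if_neg (by decide), if_neg (by decide), if_neg (by decide), if_neg (by decide), if_neg (by decide), if_pos (by decide), ]
  simp only [wom0, wom1, wom2, wom3, wom4]

lemma pv234 {F : Type*} [Field F] (ω : Finset ℕ → F) :
    pentV ω ![1,2,3,4,5] {2,3,4} = ![-ω {1,3,4,5}, 0, -ω {1,2,3,5}] := by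
  rw [pentV, if_neg (by decide), if_neg (by decide), if_neg (by decide), if_neg (by decide), if_neg (by decide), if_neg (by decide), if_pos (by decide), ]
  simp only [wom0, wom1, wom2, wom3, wom4]

lemma pv235 {F : Type*} [Field F] (ω : Finset ℕ → F) :
    pentV ω ![1,2,3,4,5] {2,3,5} = ![ω {1,3,4,5}, -ω {1,3,4,5}, ω {1,2,3,4}] := by
  rw [pentV, if_neg (by decide), if_neg (by decide), if_neg (by decide), if_neg (by decide), if_neg (by decide), if_neg (by decide), if_neg (by decide), if_pos (by decide), ]
  simp only [wom0, wom1, wom2, wom3, wom4]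

lemma pv245 {F : Type*} [Field F] (ω : Finset ℕ → F) :
    pentV ω ![1,2,3,4,5] {2,4,5} = ![-ω {1,3,4,5}, 0, 0] := by
  rw [pentV, if_neg (by decide), if_neg (by decide), if_neg (by decide), if_neg (by decide), if_neg (by decide), if_neg (by decide), if_neg (by decide), if_neg (by decide), if_pos (by decide), ]
  simp only [wom0, wom1, wom2, wom3, wom4]

lemma pv345 {F : Type*} [Field F] (ω : Finset ℕ → F) :
    pentV ω ![1,2,3,4,5] {3,4,5} = ![ω {1,3,4,5} - ω {2,3,4,5}, ω {1,2,3,5}, 0] := by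
  rw [pentV, if_neg (by decide), if_neg (by decide), if_neg (by decide), if_neg (by decide), if_neg (by decide), if_neg (by decide), if_neg (by decide), if_neg (by decide), if_neg (by decide), if_pos (by decide), ]
  simp only [wom0, wom1, wom2, wom3, wom4]


set_option maxHeartbeats 4000000 in
/-- uniqueness, up to a gauge automorphism, of the triangle
vectors of one pentachoron, over the field `ℚ(β_{ijk} : 1 ≤ i < j < k ≤ 5)`. -/
theorem statement3 (e' : ℕ → ℕ → ℕ → (Fin 3 → FF 5))
    (hanti1 : ∀ i j k, e' j i k = -e' i j k)
    (hanti2 : ∀ i j k, e' i k j = -e' i j k)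
    (ha : ∀ i ∈ Finset.Icc 1 5, ∀ j ∈ Finset.Icc 1 5, i ≠ j →
      ∑ k ∈ Finset.Icc 1 5 \ {i, j}, e' i j k = 0)
    (hb : ∃ β' : Finset ℕ → FF 5,
      (∀ t ∈ Finset.powersetCard 4 (Finset.Icc 1 5),
        cobound β' t = cobound (betaGen 5) t) ∧
      ∑ s ∈ Finset.powersetCard 3 (Finset.Icc 1 5), β' s • onTri e' s = 0)
    (hc : Submodule.span (FF 5)
      {x | ∃ s ∈ Finset.powersetCard 3 (Finset.Icc 1 5), x = onTri e' s} = ⊤) :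
    ∃ A : Matrix.GeneralLinearGroup (Fin 3) (FF 5),
      ∀ s ∈ Finset.powersetCard 3 (Finset.Icc 1 5),
        onTri e' s =
          Matrix.mulVec (A : Matrix (Fin 3) (Fin 3) (FF 5))
            (pentV (cobound (betaGen 5)) ![1,2,3,4,5] s) := by
  obtain ⟨β', hβc, hβs⟩ := hb
  -- the five ω-values
  set w0 : FF 5 := cobound (betaGen 5) {2,3,4,5} with hw0def
  set w1 : FF 5 := cobound (betaGen 5) {1,3,4,5} with hw1def
  set w3 : FF 5 := cobound (betaGen 5) {1,2,3,5} with hw3def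
  set w4 : FF 5 := cobound (betaGen 5) {1,2,3,4} with hw4def
  have hw1 : w1 ≠ 0 := by
    rw [hw1def, cb1345]
    exact betaGen_comb_ne _ _ _ _ (by decide) (by decide) (by decide) (by decide)
      (by decide) (by decide) (by decide)
  have hw3 : w3 ≠ 0 := by
    rw [hw3def, cb1235]
    exact betaGen_comb_ne _ _ _ _ (by decide) (by decide) (by decide) (by decide)
      (by decide) (by decide) (by decide)
  -- the six relations from (a)
  have h12 := ha 1 (by decide) 2 (by decide) (by decide)
  rw [show Finset.Icc 1 5 \ {1,2} = ({3,4,5}:Finset ℕ) from by decide,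
    Finset.sum_insert (by decide), Finset.sum_insert (by decide), Finset.sum_singleton] at h12
  have h14 := ha 1 (by decide) 4 (by decide) (by decide)
  rw [show Finset.Icc 1 5 \ {1,4} = ({2,3,5}:Finset ℕ) from by decide,
    Finset.sum_insert (by decide), Finset.sum_insert (by decide), Finset.sum_singleton,
    hanti2 1 2 4, hanti2 1 3 4] at h14
  have h15 := ha 1 (by decide) 5 (by decide) (by decide)
  rw [show Finset.Icc 1 5 \ {1,5} = ({2,3,4}:Finset ℕ) from by decide,
    Finset.sum_insert (by decide), Finset.sum_insert (by decide), Finset.sum_singleton,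
    hanti2 1 2 5, hanti2 1 3 5, hanti2 1 4 5] at h15
  have h24 := ha 2 (by decide) 4 (by decide) (by decide)
  rw [show Finset.Icc 1 5 \ {2,4} = ({1,3,5}:Finset ℕ) from by decide,
    Finset.sum_insert (by decide), Finset.sum_insert (by decide), Finset.sum_singleton,
    hanti2 2 1 4, hanti1 1 2 4, hanti2 2 3 4] at h24
  have h25 := ha 2 (by decide) 5 (by decide) (by decide)
  rw [show Finset.Icc 1 5 \ {2,5} = ({1,3,4}:Finset ℕ) from by decide,
    Finset.sum_insert (by decide), Finset.sum_insert (by decide), Finset.sum_singleton,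
    hanti2 2 1 5, hanti1 1 2 5, hanti2 2 3 5, hanti2 2 4 5] at h25
  have h45 := ha 4 (by decide) 5 (by decide) (by decide)
  rw [show Finset.Icc 1 5 \ {4,5} = ({1,2,3}:Finset ℕ) from by decide,
    Finset.sum_insert (by decide), Finset.sum_insert (by decide), Finset.sum_singleton,
    hanti2 4 1 5, hanti1 1 4 5, hanti2 4 2 5, hanti1 2 4 5, hanti2 4 3 5, hanti1 3 4 5] at h45
  -- scalar versions
  have H12 : ∀ i, e' 1 2 3 i + e' 1 2 4 i + e' 1 2 5 i = 0 := fun i => by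
    have := congrFun h12 i
    simp only [Pi.add_apply, Pi.neg_apply, Pi.zero_apply] at this
    linear_combination this
  have H14 : ∀ i, e' 1 4 5 i - e' 1 2 4 i - e' 1 3 4 i = 0 := fun i => by
    have := congrFun h14 i
    simp only [Pi.add_apply, Pi.neg_apply, Pi.zero_apply] at this
    linear_combination this
  have H15 : ∀ i, e' 1 2 5 i + e' 1 3 5 i + e' 1 4 5 i = 0 := fun i => by
    have := congrFun h15 i
    simp only [Pi.add_apply, Pi.neg_apply, Pi.zero_apply] at this
    linear_combination -this
  have H24 : ∀ i, e' 1 2 4 i - e' 2 3 4 i + e' 2 4 5 i = 0 := fun i => by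
    have := congrFun h24 i
    simp only [Pi.add_apply, Pi.neg_apply, Pi.zero_apply] at this
    linear_combination this
  have H25 : ∀ i, e' 1 2 5 i - e' 2 3 5 i - e' 2 4 5 i = 0 := fun i => by
    have := congrFun h25 i
    simp only [Pi.add_apply, Pi.neg_apply, Pi.zero_apply] at this
    linear_combination this
  have H45 : ∀ i, e' 1 4 5 i + e' 2 4 5 i + e' 3 4 5 i = 0 := fun i => by
    have := congrFun h45 i
    simp only [Pi.add_apply, Pi.neg_apply, Pi.zero_apply] at this
    linear_combination this
  -- the cochain condition
  rw [show Finset.powersetCard 3 (Finset.Icc 1 5) = {({1,2,3} : Finset ℕ),({1,2,4} : Finset ℕ),({1,2,5} : Finset ℕ),({1,3,4} : Finset ℕ),({1,3,5} : Finset ℕ),({1,4,5} : Finset ℕ),({2,3,4} : Finset ℕ),({2,3,5} : Finset ℕ),({2,4,5} : Finset ℕ),({3,4,5} : Finset ℕ)} from by decide] at hβs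
  rw [Finset.sum_insert (by decide), Finset.sum_insert (by decide), Finset.sum_insert (by decide),
      Finset.sum_insert (by decide), Finset.sum_insert (by decide), Finset.sum_insert (by decide),
      Finset.sum_insert (by decide), Finset.sum_insert (by decide), Finset.sum_insert (by decide),
      Finset.sum_singleton] at hβs
  rw [show onTri e' ({1,2,3}:Finset ℕ) = e' 1 2 3 from onTri3 e' (by norm_num) (by norm_num),
      show onTri e' ({1,2,4}:Finset ℕ) = e' 1 2 4 from onTri3 e' (by norm_num) (by norm_num),
      show onTri e' ({1,2,5}:Finset ℕ) = e' 1 2 5 from onTri3 e' (by norm_num) (by norm_num),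
      show onTri e' ({1,3,4}:Finset ℕ) = e' 1 3 4 from onTri3 e' (by norm_num) (by norm_num),
      show onTri e' ({1,3,5}:Finset ℕ) = e' 1 3 5 from onTri3 e' (by norm_num) (by norm_num),
      show onTri e' ({1,4,5}:Finset ℕ) = e' 1 4 5 from onTri3 e' (by norm_num) (by norm_num),
      show onTri e' ({2,3,4}:Finset ℕ) = e' 2 3 4 from onTri3 e' (by norm_num) (by norm_num),
      show onTri e' ({2,3,5}:Finset ℕ) = e' 2 3 5 from onTri3 e' (by norm_num) (by norm_num),
      show onTri e' ({2,4,5}:Finset ℕ) = e' 2 4 5 from onTri3 e' (by norm_num) (by norm_num),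
      show onTri e' ({3,4,5}:Finset ℕ) = e' 3 4 5 from onTri3 e' (by norm_num) (by norm_num)] at hβs
  have HS : ∀ i, β' {1,2,3} * e' 1 2 3 i + β' {1,2,4} * e' 1 2 4 i + β' {1,2,5} * e' 1 2 5 i + β' {1,3,4} * e' 1 3 4 i + β' {1,3,5} * e' 1 3 5 i + β' {1,4,5} * e' 1 4 5 i + β' {2,3,4} * e' 2 3 4 i + β' {2,3,5} * e' 2 3 5 i + β' {2,4,5} * e' 2 4 5 i + β' {3,4,5} * e' 3 4 5 i = 0 := fun i => by
    have := congrFun hβs i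
    simp only [Pi.add_apply, Pi.smul_apply, smul_eq_mul, Pi.zero_apply] at this
    linear_combination this
  -- coboundary conditions
  have hc0 := hβc {2,3,4,5} (by decide)
  rw [cb2345 β'] at hc0
  have hc1 := hβc {1,3,4,5} (by decide)
  rw [cb1345 β'] at hc1
  have hc3 := hβc {1,2,3,5} (by decide)
  rw [cb1235 β'] at hc3
  have hc4 := hβc {1,2,3,4} (by decide)
  rw [cb1234 β'] at hc4
  -- the key linear relation
  have hstar : ∀ i, w0 * e' 2 4 5 i + w1 * e' 1 4 5 i - w3 * e' 1 2 5 i - w4 * e' 1 2 4 i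
      = 0 := fun i => by
    linear_combination -e' 2 4 5 i * hc0 - e' 1 4 5 i * hc1 + e' 1 2 5 i * hc3
      + e' 1 2 4 i * hc4 - HS i + β' {1,2,3} * H12 i - β' {1,3,4} * H14 i
      + β' {1,3,5} * H15 i - β' {2,3,4} * H24 i - β' {2,3,5} * H25 i + β' {3,4,5} * H45 i
  -- the gauge matrix
  set A : Matrix (Fin 3) (Fin 3) (FF 5) := Matrix.of (fun i j =>
    ![-w3 * e' 2 4 5 i, -(w0 * e' 2 4 5 i + w1 * e' 1 4 5 i), -w1 * e' 1 2 4 i] j / (w1 * w3))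
    with hA
  have hAe : ∀ i j, A i j =
      ![-w3 * e' 2 4 5 i, -(w0 * e' 2 4 5 i + w1 * e' 1 4 5 i), -w1 * e' 1 2 4 i] j / (w1 * w3) :=
    fun i j => rfl
  have key : ∀ s ∈ Finset.powersetCard 3 (Finset.Icc 1 5),
      onTri e' s = Matrix.mulVec A (pentV (cobound (betaGen 5)) ![1,2,3,4,5] s) := by
    intro s hs
    rw [show Finset.powersetCard 3 (Finset.Icc 1 5) = {({1,2,3} : Finset ℕ),({1,2,4} : Finset ℕ),({1,2,5} : Finset ℕ),({1,3,4} : Finset ℕ),({1,3,5} : Finset ℕ),({1,4,5} : Finset ℕ),({2,3,4} : Finset ℕ),({2,3,5} : Finset ℕ),({2,4,5} : Finset ℕ),({3,4,5} : Finset ℕ)} from by decide] at hs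
    simp only [Finset.mem_insert, Finset.mem_singleton] at hs
    rcases hs with rfl|rfl|rfl|rfl|rfl|rfl|rfl|rfl|rfl|rfl
    · -- 123
      rw [onTri3 e' (by norm_num) (by norm_num), pv123]
      funext i
      simp only [Matrix.mulVec, dotProduct, Fin.sum_univ_three, hAe,
        Matrix.cons_val_zero, Matrix.cons_val_one, Matrix.head_cons,
        Matrix.cons_val_two, Matrix.tail_cons]
      simp only [← hw0def, ← hw1def, ← hw3def, ← hw4def]
      rw [div_mul_eq_mul_div, div_mul_eq_mul_div, div_mul_eq_mul_div, ← add_div,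
        ← add_div, eq_div_iff (mul_ne_zero hw1 hw3)]
      linear_combination w1*w3*H12 i + w1*hstar i
    · -- 124
      rw [onTri3 e' (by norm_num) (by norm_num), pv124]
      funext i
      simp only [Matrix.mulVec, dotProduct, Fin.sum_univ_three, hAe,
        Matrix.cons_val_zero, Matrix.cons_val_one, Matrix.head_cons,
        Matrix.cons_val_two, Matrix.tail_cons]
      simp only [← hw0def, ← hw1def, ← hw3def, ← hw4def]
      rw [div_mul_eq_mul_div, div_mul_eq_mul_div, div_mul_eq_mul_div, ← add_div,
        ← add_div, eq_div_iff (mul_ne_zero hw1 hw3)]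
      ring
    · -- 125
      rw [onTri3 e' (by norm_num) (by norm_num), pv125]
      funext i
      simp only [Matrix.mulVec, dotProduct, Fin.sum_univ_three, hAe,
        Matrix.cons_val_zero, Matrix.cons_val_one, Matrix.head_cons,
        Matrix.cons_val_two, Matrix.tail_cons]
      simp only [← hw0def, ← hw1def, ← hw3def, ← hw4def]
      rw [div_mul_eq_mul_div, div_mul_eq_mul_div, div_mul_eq_mul_div, ← add_div,
        ← add_div, eq_div_iff (mul_ne_zero hw1 hw3)]
      linear_combination (-w1)*hstar i
    · -- 134
      rw [onTri3 e' (by norm_num) (by norm_num), pv134]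
      funext i
      simp only [Matrix.mulVec, dotProduct, Fin.sum_univ_three, hAe,
        Matrix.cons_val_zero, Matrix.cons_val_one, Matrix.head_cons,
        Matrix.cons_val_two, Matrix.tail_cons]
      simp only [← hw0def, ← hw1def, ← hw3def, ← hw4def]
      rw [div_mul_eq_mul_div, div_mul_eq_mul_div, div_mul_eq_mul_div, ← add_div,
        ← add_div, eq_div_iff (mul_ne_zero hw1 hw3)]
      linear_combination (-(w1*w3))*H14 i
    · -- 135
      rw [onTri3 e' (by norm_num) (by norm_num), pv135]
      funext i
      simp only [Matrix.mulVec, dotProduct, Fin.sum_univ_three, hAe,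
        Matrix.cons_val_zero, Matrix.cons_val_one, Matrix.head_cons,
        Matrix.cons_val_two, Matrix.tail_cons]
      simp only [← hw0def, ← hw1def, ← hw3def, ← hw4def]
      rw [div_mul_eq_mul_div, div_mul_eq_mul_div, div_mul_eq_mul_div, ← add_div,
        ← add_div, eq_div_iff (mul_ne_zero hw1 hw3)]
      linear_combination w1*w3*H15 i + w1*hstar i
    · -- 145
      rw [onTri3 e' (by norm_num) (by norm_num), pv145]
      funext i
      simp only [Matrix.mulVec, dotProduct, Fin.sum_univ_three, hAe,
        Matrix.cons_val_zero, Matrix.cons_val_one, Matrix.head_cons,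
        Matrix.cons_val_two, Matrix.tail_cons]
      simp only [← hw0def, ← hw1def, ← hw3def, ← hw4def]
      rw [div_mul_eq_mul_div, div_mul_eq_mul_div, div_mul_eq_mul_div, ← add_div,
        ← add_div, eq_div_iff (mul_ne_zero hw1 hw3)]
      ring
    · -- 234
      rw [onTri3 e' (by norm_num) (by norm_num), pv234]
      funext i
      simp only [Matrix.mulVec, dotProduct, Fin.sum_univ_three, hAe,
        Matrix.cons_val_zero, Matrix.cons_val_one, Matrix.head_cons,
        Matrix.cons_val_two, Matrix.tail_cons]
      simp only [← hw0def, ← hw1def, ← hw3def, ← hw4def]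
      rw [div_mul_eq_mul_div, div_mul_eq_mul_div, div_mul_eq_mul_div, ← add_div,
        ← add_div, eq_div_iff (mul_ne_zero hw1 hw3)]
      linear_combination (-(w1*w3))*H24 i
    · -- 235
      rw [onTri3 e' (by norm_num) (by norm_num), pv235]
      funext i
      simp only [Matrix.mulVec, dotProduct, Fin.sum_univ_three, hAe,
        Matrix.cons_val_zero, Matrix.cons_val_one, Matrix.head_cons,
        Matrix.cons_val_two, Matrix.tail_cons]
      simp only [← hw0def, ← hw1def, ← hw3def, ← hw4def]
      rw [div_mul_eq_mul_div, div_mul_eq_mul_div, div_mul_eq_mul_div, ← add_div,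
        ← add_div, eq_div_iff (mul_ne_zero hw1 hw3)]
      linear_combination (-(w1*w3))*H25 i - w1*hstar i
    · -- 245
      rw [onTri3 e' (by norm_num) (by norm_num), pv245]
      funext i
      simp only [Matrix.mulVec, dotProduct, Fin.sum_univ_three, hAe,
        Matrix.cons_val_zero, Matrix.cons_val_one, Matrix.head_cons,
        Matrix.cons_val_two, Matrix.tail_cons]
      simp only [← hw0def, ← hw1def, ← hw3def, ← hw4def]
      rw [div_mul_eq_mul_div, div_mul_eq_mul_div, div_mul_eq_mul_div, ← add_div,
        ← add_div, eq_div_iff (mul_ne_zero hw1 hw3)]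
      ring
    · -- 345
      rw [onTri3 e' (by norm_num) (by norm_num), pv345]
      funext i
      simp only [Matrix.mulVec, dotProduct, Fin.sum_univ_three, hAe,
        Matrix.cons_val_zero, Matrix.cons_val_one, Matrix.head_cons,
        Matrix.cons_val_two, Matrix.tail_cons]
      simp only [← hw0def, ← hw1def, ← hw3def, ← hw4def]
      rw [div_mul_eq_mul_div, div_mul_eq_mul_div, div_mul_eq_mul_div, ← add_div,
        ← add_div, eq_div_iff (mul_ne_zero hw1 hw3)]
      linear_combination w1*w3*H45 i
  -- A is invertible
  have hsurj : Function.Surjective A.mulVec := by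
    intro x
    have hx : x ∈ Submodule.span (FF 5)
        {y | ∃ s ∈ Finset.powersetCard 3 (Finset.Icc 1 5), y = onTri e' s} := by
      rw [hc]; trivial
    have hle : Submodule.span (FF 5)
        {y | ∃ s ∈ Finset.powersetCard 3 (Finset.Icc 1 5), y = onTri e' s}
        ≤ LinearMap.range A.mulVecLin := by
      rw [Submodule.span_le]
      rintro y ⟨s, hs, rfl⟩
      exact ⟨pentV (cobound (betaGen 5)) ![1,2,3,4,5] s, (key s hs).symm⟩
    obtain ⟨y, hy⟩ := hle hx
    exact ⟨y, hy⟩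
  have hu : IsUnit A := Matrix.mulVec_surjective_iff_isUnit.mp hsurj
  refine ⟨hu.unit, fun s hs => ?_⟩
  rw [show ((hu.unit : Matrix.GeneralLinearGroup (Fin 3) (FF 5)) :
      Matrix (Fin 3) (Fin 3) (FF 5)) = A from hu.unit_spec]
  exact key s hs

end
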